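/- arXiv:math/0507264 — 4 statements merged into one kernel-verified Lean document; each statement's English description precedes it below -/
import Mathlib

section
/- Let K : ℝ → ℝ be C¹ with K'(p) > 0 for all p ∈ ℝ and with K' an even function. Let f : (0,∞) → ℝ be locally Lipschitz on (0,∞) (not necessarily up to 0). Let c > 0 and let u, w be real functions on [0,c) that are continuously differentiable on [0,c) and positive on (0,c), such that the functions t ↦ K(u'(t)) and t ↦ K(w'(t)) are differentiable on (0,c) with (d/dt) K(u'(t)) = f(u(t)) and (d/dt) K(w'(t)) = f(w(t)) for all t ∈ (0,c). Assume u(0) = w(0) = 0 and u'(0) = w'(0). Then u(t) = w(t) for all t ∈ [0,c). -/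
/-!
With `Φ(p) = ∫₀ᵖ s K'(s) ds` and `F(x) = ∫₁ˣ f`, the energy `Φ(u') - F(u)` of a solution is
constant. Letting `t → 0⁺` shows that `F` has a limit at `0⁺` and that the energy is determined
by `u'(0)`, so `u` and `w` have the same energy. As `Φ` is even and strictly increasing on
`[0, ∞)`, `u(t) = w(s)` then forces `|u'(t)| = |w'(s)|`.

Where `u > 0`, `f` is Lipschitz and `K` is locally invertible, so the first-order system for
`(u, K(u'))` has unique solutions: two solutions with the same value and derivative at one time
agree on any common open interval. If `u(t) < w(t)` for a small `t`, pick `s < t` with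
`w(s) = u(t)`. Depending on the sign of `u'(t) = ±w'(s)`, the translate `w(· + s - t)` or the
reflection `w(t + s - ·)` (the equation is reversible since `K'` is even) matches `u` to first
order at `t`, hence agrees with it up to the time where it reaches `w(0) = 0`. That time is
interior, contradicting `u > 0`. So `u = w` near `0`, and uniqueness carries this to `[0, c)`.
-/

open Set Filter Topology

noncomputable section

def kineticEnergy (K : ℝ → ℝ) (p : ℝ) : ℝ := ∫ s in (0 : ℝ)..p, s * deriv K s

-- Based at `1`: `f` need not be integrable near `0`.
def potential (f : ℝ → ℝ) (x : ℝ) : ℝ := ∫ s in (1 : ℝ)..x, f s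

def energy (K f u : ℝ → ℝ) (t : ℝ) : ℝ := kineticEnergy K (deriv u t) - potential f (u t)

end

structure IsPosSolOn (K f u : ℝ → ℝ) (I : Set ℝ) : Prop where
  contDiffOn : ContDiffOn ℝ 1 u I
  pos : ∀ t ∈ I, 0 < u t
  hasDerivAt_comp_deriv : ∀ t ∈ I, HasDerivAt (fun τ => K (deriv u τ)) (f (u t)) t

theorem LocallyLipschitzOn.of_forall_isCompact {X Y : Type*} [PseudoEMetricSpace X]
    [LocallyCompactSpace X] [PseudoEMetricSpace Y] {s : Set X} {f : X → Y} (hs : IsOpen s)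
    (h : ∀ t ⊆ s, IsCompact t → ∃ L, LipschitzOnWith L f t) : LocallyLipschitzOn s f := by
  intro x hx
  obtain ⟨t, ht, hts, htc⟩ := local_compact_nhds (hs.mem_nhds hx)
  obtain ⟨L, hL⟩ := h t hts htc
  exact ⟨L, t, mem_nhdsWithin_of_mem_nhds ht, hL⟩

theorem IsPreconnected.eqOn_of_eventuallyEq {X Y : Type*} [TopologicalSpace X]
    [TopologicalSpace Y] [T2Space Y] {s : Set X} (hs : IsPreconnected s) {F G : X → Y}
    (hF : ∀ x ∈ s, ContinuousAt F x) (hG : ∀ x ∈ s, ContinuousAt G x)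
    (hloc : ∀ x ∈ s, F x = G x → F =ᶠ[𝓝 x] G) {x₀ : X} (hx₀ : x₀ ∈ s) (h₀ : F x₀ = G x₀) :
    EqOn F G s := by
  have hsub : s ⊆ {x | F =ᶠ[𝓝 x] G} := by
    refine hs.subset_of_closure_inter_subset isOpen_setOfPred_eventually_nhds
      ⟨x₀, hx₀, hloc x₀ hx₀ h₀⟩ ?_
    rintro x ⟨hx, hxs⟩
    refine hloc x hxs (tendsto_nhds_unique_of_frequently_eq (hF x hxs) (hG x hxs) ?_)
    exact (mem_closure_iff_frequently.1 hx).mono fun y hy => hy.self_of_nhds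
  exact fun x hx => (hsub hx).self_of_nhds

theorem tendsto_nhdsGT_of_tendsto_comp {u g : ℝ → ℝ} {c : ℝ} {l : Filter ℝ} (hc : 0 < c)
    (hu : ContinuousOn u (Ico 0 c)) (hu0 : u 0 = 0) (hpos : ∀ t ∈ Ioo 0 c, 0 < u t)
    (h : Tendsto (g ∘ u) (𝓝[>] 0) l) : Tendsto g (𝓝[>] 0) l := by
  intro s hs
  obtain ⟨t₁, ht₁, hsub⟩ :=
    mem_nhdsGT_iff_exists_Ioo_subset.1 (inter_mem (h hs) (Ioo_mem_nhdsGT_of_mem ⟨le_rfl, hc⟩))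
  obtain ⟨τ, hτ, hτc⟩ : ∃ τ ∈ Ioo 0 t₁, τ ∈ Ioo 0 c := by
    obtain ⟨τ, hτ⟩ := nonempty_Ioo.2 (mem_Ioi.1 ht₁)
    exact ⟨τ, hτ, (hsub hτ).2⟩
  refine mem_map.2 (mem_of_superset (Ioo_mem_nhdsGT (hpos τ hτc)) fun y hy => ?_)
  rw [← hu0] at hy
  obtain ⟨x, hx, rfl⟩ := intermediate_value_Ioo hτ.1.le
    (hu.mono fun x hx => ⟨hx.1, hx.2.trans_lt hτc.2⟩) hy
  exact (hsub ⟨hx.1, hx.2.trans hτ.2⟩).1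

theorem ContDiffOn.tendsto_deriv_nhdsGT {u : ℝ → ℝ} {a b : ℝ} (hab : a < b)
    (hu : ContDiffOn ℝ 1 u (Ico a b)) :
    Tendsto (deriv u) (𝓝[>] a) (𝓝 (derivWithin u (Ico a b) a)) := by
  have hcont := (hu.continuousOn_derivWithin (uniqueDiffOn_Ico a b) le_rfl).continuousWithinAt
    (left_mem_Ico.2 hab)
  rw [← nhdsWithin_Ioo_eq_nhdsGT hab]
  refine (hcont.mono_left (nhdsWithin_mono a Ioo_subset_Ico_self)).congr' ?_
  filter_upwards [self_mem_nhdsWithin] with t ht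
  exact derivWithin_of_mem_nhds (Ico_mem_nhds ht.1 ht.2)

theorem hasDerivAt_potential {f : ℝ → ℝ} (hf : ContinuousOn f (Ioi 0)) {x : ℝ} (hx : 0 < x) :
    HasDerivAt (potential f) (f x) x := by
  refine intervalIntegral.integral_hasDerivAt_right ((hf.mono ?_).intervalIntegrable)
    (hf.stronglyMeasurableAtFilter isOpen_Ioi x hx) (hf.continuousAt (Ioi_mem_nhds hx))
  exact ordConnected_Ioi.uIcc_subset one_pos hx

section KineticEnergy

variable {K : ℝ → ℝ}

theorem hasDerivAt_kineticEnergy (hK : ContDiff ℝ 1 K) (p : ℝ) :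
    HasDerivAt (kineticEnergy K) (p * deriv K p) p := by
  have hcont : Continuous fun s : ℝ => s * deriv K s :=
    continuous_id.mul (hK.continuous_deriv le_rfl)
  exact intervalIntegral.integral_hasDerivAt_right (hcont.intervalIntegrable _ _)
    (hcont.stronglyMeasurableAtFilter _ _) hcont.continuousAt

theorem kineticEnergy_neg (hKeven : ∀ p, deriv K (-p) = deriv K p) (p : ℝ) :
    kineticEnergy K (-p) = kineticEnergy K p := by
  have := intervalIntegral.integral_comp_neg (fun s => s * deriv K s) (a := 0) (b := p)
  simp only [neg_zero] at this
  rw [kineticEnergy, intervalIntegral.integral_symm, ← this]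
  simp [kineticEnergy, hKeven]

theorem strictMonoOn_kineticEnergy (hK : ContDiff ℝ 1 K) (hK' : ∀ p, 0 < deriv K p) :
    StrictMonoOn (kineticEnergy K) (Ici 0) := by
  refine strictMonoOn_of_deriv_pos (convex_Ici 0)
    (fun x _ => (hasDerivAt_kineticEnergy hK x).continuousAt.continuousWithinAt) fun x hx => ?_
  rw [interior_Ici] at hx
  rw [(hasDerivAt_kineticEnergy hK x).deriv]
  exact mul_pos hx (hK' x)

theorem abs_eq_abs_of_kineticEnergy_eq (hK : ContDiff ℝ 1 K) (hK' : ∀ p, 0 < deriv K p)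
    (hKeven : ∀ p, deriv K (-p) = deriv K p) {p q : ℝ}
    (h : kineticEnergy K p = kineticEnergy K q) : |p| = |q| := by
  have habs : ∀ r, kineticEnergy K |r| = kineticEnergy K r := fun r => by
    rcases abs_choice r with hr | hr <;> rw [hr]
    exact kineticEnergy_neg hKeven r
  refine (strictMonoOn_kineticEnergy hK hK').injOn (abs_nonneg p) (abs_nonneg q) ?_
  rw [habs, habs, h]

theorem apply_neg_eq_two_mul_sub (hK : Differentiable ℝ K)
    (hKeven : ∀ p, deriv K (-p) = deriv K p) (p : ℝ) : K (-p) = 2 * K 0 - K p := by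
  have hderiv : ∀ q, HasDerivAt (fun x => K x + K (-x)) 0 q := fun q => by
    have := (hK q).hasDerivAt.add ((hK (-q)).hasDerivAt.comp q (hasDerivAt_neg q))
    rwa [hKeven, mul_neg_one, add_neg_cancel] at this
  have := is_const_of_deriv_eq_zero (fun x => (hderiv x).differentiableAt)
    (fun x => (hderiv x).deriv) p 0
  simp only [neg_zero] at this
  linarith

theorem ContDiff.exists_localInverse (hK : ContDiff ℝ 1 K) {p : ℝ} (hp : deriv K p ≠ 0) :
    ∃ ψ : ℝ → ℝ, (∀ᶠ q in 𝓝 p, ψ (K q) = q) ∧ HasStrictDerivAt ψ (deriv K p)⁻¹ (K p) := by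
  have hsd := hK.contDiffAt.hasStrictDerivAt one_ne_zero (x := p)
  exact ⟨_, (hsd.hasStrictFDerivAt_equiv hp).eventually_left_inverse, hsd.to_localInverse hp⟩

theorem hasDerivAt_kineticEnergy_comp (hK : ContDiff ℝ 1 K) {g : ℝ → ℝ} {y t : ℝ}
    (hKg' : deriv K (g t) ≠ 0) (hg : ContinuousAt g t)
    (hKg : HasDerivAt (fun τ => K (g τ)) y t) :
    HasDerivAt (fun τ => kineticEnergy K (g τ)) (g t * y) t := by
  obtain ⟨ψ, hleft, hψ⟩ := hK.exists_localInverse hKg'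
  have hΦψ : HasDerivAt (fun z => kineticEnergy K (ψ z))
      (g t * deriv K (g t) * (deriv K (g t))⁻¹) (K (g t)) := by
    have := (hasDerivAt_kineticEnergy hK (ψ (K (g t)))).comp (K (g t)) hψ.hasDerivAt
    rwa [hleft.self_of_nhds] at this
  refine ((hΦψ.comp t hKg).congr_of_eventuallyEq ?_).congr_deriv ?_
  · filter_upwards [hg.eventually hleft] with τ hτ
    simp [hτ]
  · field_simp

end KineticEnergy

namespace IsPosSolOn

variable {K f u w : ℝ → ℝ} {I J : Set ℝ} {t : ℝ}

theorem mono (hu : IsPosSolOn K f u I) (hJI : J ⊆ I) : IsPosSolOn K f u J :=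
  ⟨hu.contDiffOn.mono hJI, fun t ht => hu.pos t (hJI ht),
    fun t ht => hu.hasDerivAt_comp_deriv t (hJI ht)⟩

theorem hasDerivAt (hu : IsPosSolOn K f u I) (hI : IsOpen I) (ht : t ∈ I) :
    HasDerivAt u (deriv u t) t :=
  ((hu.contDiffOn.contDiffAt (hI.mem_nhds ht)).differentiableAt one_ne_zero).hasDerivAt

theorem continuousAt_deriv (hu : IsPosSolOn K f u I) (hI : IsOpen I) (ht : t ∈ I) :
    ContinuousAt (deriv u) t :=
  (hu.contDiffOn.continuousOn_deriv_of_isOpen hI le_rfl).continuousAt (hI.mem_nhds ht)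

theorem comp_add_const (hu : IsPosSolOn K f u I) (a : ℝ) :
    IsPosSolOn K f (fun r => u (r + a)) ((· + a) ⁻¹' I) where
  contDiffOn :=
    hu.contDiffOn.comp (contDiff_id.add contDiff_const).contDiffOn (mapsTo_preimage _ _)
  pos t ht := hu.pos _ ht
  hasDerivAt_comp_deriv t ht := by
    simpa only [deriv_comp_add_const] using (hu.hasDerivAt_comp_deriv _ ht).comp_add_const t a

theorem comp_const_sub (hK : Differentiable ℝ K) (hKeven : ∀ p, deriv K (-p) = deriv K p)
    (hu : IsPosSolOn K f u I) (a : ℝ) :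
    IsPosSolOn K f (fun r => u (a - r)) ((a - ·) ⁻¹' I) where
  contDiffOn :=
    hu.contDiffOn.comp (contDiff_const.sub contDiff_id).contDiffOn (mapsTo_preimage _ _)
  pos t ht := hu.pos _ ht
  hasDerivAt_comp_deriv t ht := by
    simp only [deriv_comp_const_sub, apply_neg_eq_two_mul_sub hK hKeven]
    simpa using ((hu.hasDerivAt_comp_deriv _ ht).comp_const_sub a t).const_sub (2 * K 0)

theorem hasDerivAt_energy (hK : ContDiff ℝ 1 K) (hK' : ∀ p, 0 < deriv K p)
    (hf : ContinuousOn f (Ioi 0)) (hu : IsPosSolOn K f u I) (hI : IsOpen I) (ht : t ∈ I) :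
    HasDerivAt (energy K f u) 0 t := by
  have hkin := hasDerivAt_kineticEnergy_comp hK (hK' _).ne' (hu.continuousAt_deriv hI ht)
    (hu.hasDerivAt_comp_deriv t ht)
  have hpot := (hasDerivAt_potential hf (hu.pos t ht)).comp t (hu.hasDerivAt hI ht)
  exact (hkin.sub hpot).congr_deriv (by ring)

theorem energy_eq (hK : ContDiff ℝ 1 K) (hK' : ∀ p, 0 < deriv K p)
    (hf : ContinuousOn f (Ioi 0)) (hu : IsPosSolOn K f u I) (hI : IsOpen I)
    (hI' : IsPreconnected I) {t₁ t₂ : ℝ} (ht₁ : t₁ ∈ I) (ht₂ : t₂ ∈ I) :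
    energy K f u t₁ = energy K f u t₂ :=
  hI.is_const_of_deriv_eq_zero hI'
    (fun _ ht => (hu.hasDerivAt_energy hK hK' hf hI ht).differentiableAt.differentiableWithinAt)
    (fun _ ht => (hu.hasDerivAt_energy hK hK' hf hI ht).deriv) ht₁ ht₂


theorem continuousAt_phase (hK : Continuous K) (hu : IsPosSolOn K f u I) (hI : IsOpen I)
    (ht : t ∈ I) : ContinuousAt (fun τ => (u τ, K (deriv u τ))) t :=
  (hu.hasDerivAt hI ht).continuousAt.prodMk (hK.continuousAt.comp (hu.continuousAt_deriv hI ht))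

theorem eventually_hasDerivAt_phase (hK : Continuous K) (hu : IsPosSolOn K f u I)
    (hI : IsOpen I) (ht : t ∈ I) {ψ : ℝ → ℝ} (hψ : ∀ᶠ p in 𝓝 (deriv u t), ψ (K p) = p)
    {S : Set (ℝ × ℝ)} (hS : S ∈ 𝓝 (u t, K (deriv u t))) :
    ∀ᶠ τ in 𝓝 t, HasDerivAt (fun τ => (u τ, K (deriv u τ)))
      (ψ (K (deriv u τ)), f (u τ)) τ ∧ (u τ, K (deriv u τ)) ∈ S := by
  filter_upwards [(hu.continuousAt_deriv hI ht).eventually hψ, hI.mem_nhds ht,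
    (hu.continuousAt_phase hK hI ht).preimage_mem_nhds hS] with τ hψτ hτ hτS
  rw [hψτ]
  exact ⟨(hu.hasDerivAt hI hτ).prodMk (hu.hasDerivAt_comp_deriv τ hτ), hτS⟩

theorem eventuallyEq (hK : ContDiff ℝ 1 K) (hK' : ∀ p, 0 < deriv K p)
    (hf : LocallyLipschitzOn (Ioi 0) f) (hu : IsPosSolOn K f u I) (hw : IsPosSolOn K f w I)
    (hI : IsOpen I) (ht : t ∈ I) (h₀ : u t = w t) (h₁ : deriv u t = deriv w t) :
    u =ᶠ[𝓝 t] w := by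
  obtain ⟨ψ, hψ, hψ'⟩ := hK.exists_localInverse (hK' (deriv u t)).ne'
  obtain ⟨Lψ, T, hT, hψL⟩ := hψ'.hasStrictFDerivAt.exists_lipschitzOnWith
  obtain ⟨Lf, U, hU, hfL⟩ := hf (hu.pos t ht)
  rw [isOpen_Ioi.nhdsWithin_eq (hu.pos t ht)] at hU
  have hV : LipschitzOnWith (max Lψ Lf) (fun q : ℝ × ℝ => (ψ q.2, f q.1)) (U ×ˢ T) := by
    simpa only [mul_one, Function.comp_def] using
      (hψL.comp LipschitzWith.prod_snd.lipschitzOnWith fun _ (hq : _ ∈ U ×ˢ T) => hq.2).prodMk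
        (hfL.comp LipschitzWith.prod_fst.lipschitzOnWith fun _ (hq : _ ∈ U ×ˢ T) => hq.1)
  have hS : U ×ˢ T ∈ 𝓝 (u t, K (deriv u t)) := prod_mem_nhds hU hT
  have hphase := ODE_solution_unique_of_eventually (v := fun _ q => (ψ q.2, f q.1))
    (.of_forall fun _ => hV) (hu.eventually_hasDerivAt_phase hK.continuous hI ht hψ hS)
    (hw.eventually_hasDerivAt_phase hK.continuous hI ht (h₁ ▸ hψ) (h₀ ▸ h₁ ▸ hS))
    (by rw [h₀, h₁])
  exact hphase.fun_comp Prod.fst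

theorem eqOn (hK : ContDiff ℝ 1 K) (hK' : ∀ p, 0 < deriv K p)
    (hf : LocallyLipschitzOn (Ioi 0) f) (hu : IsPosSolOn K f u I) (hw : IsPosSolOn K f w I)
    (hI : IsOpen I) (hI' : IsPreconnected I) {t₀ : ℝ} (ht₀ : t₀ ∈ I) (h₀ : u t₀ = w t₀)
    (h₁ : deriv u t₀ = deriv w t₀) : EqOn u w I := by
  have hstate := hI'.eqOn_of_eventuallyEq (F := fun τ => (u τ, deriv u τ))
    (G := fun τ => (w τ, deriv w τ))
    (fun _ ht => (hu.hasDerivAt hI ht).continuousAt.prodMk (hu.continuousAt_deriv hI ht))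
    (fun _ ht => (hw.hasDerivAt hI ht).continuousAt.prodMk (hw.continuousAt_deriv hI ht))
    (fun _ ht h => by
      have huw := hu.eventuallyEq hK hK' hf hw hI ht (congrArg Prod.fst h) (congrArg Prod.snd h)
      exact huw.prodMk huw.deriv)
    ht₀ (Prod.ext h₀ h₁)
  exact fun τ hτ => congrArg Prod.fst (hstate hτ)

section Endpoint

variable {c s : ℝ}

theorem tendsto_potential (hK : ContDiff ℝ 1 K) (hc : 0 < c) (hu : IsPosSolOn K f u (Ioo 0 c))
    (hu₁ : ContDiffOn ℝ 1 u (Ico 0 c)) (hu₀ : u 0 = 0) {E : ℝ}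
    (hE : ∀ t ∈ Ioo 0 c, energy K f u t = E) :
    Tendsto (potential f) (𝓝[>] 0) (𝓝 (kineticEnergy K (derivWithin u (Ico 0 c) 0) - E)) := by
  refine tendsto_nhdsGT_of_tendsto_comp hc hu₁.continuousOn hu₀ hu.pos ?_
  have hkin := ((hasDerivAt_kineticEnergy hK _).continuousAt.tendsto.comp
    (hu₁.tendsto_deriv_nhdsGT hc)).sub_const E
  refine hkin.congr' ?_
  filter_upwards [Ioo_mem_nhdsGT hc] with τ hτ
  simp only [Function.comp_apply, ← hE τ hτ, energy, sub_sub_cancel]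

theorem energy_eq_of_derivWithin_eq (hK : ContDiff ℝ 1 K) (hK' : ∀ p, 0 < deriv K p)
    (hf : ContinuousOn f (Ioi 0)) (hc : 0 < c) (hu : IsPosSolOn K f u (Ioo 0 c))
    (hw : IsPosSolOn K f w (Ioo 0 c)) (hu₁ : ContDiffOn ℝ 1 u (Ico 0 c))
    (hw₁ : ContDiffOn ℝ 1 w (Ico 0 c)) (hu₀ : u 0 = 0) (hw₀ : w 0 = 0)
    (h₀ : derivWithin u (Ico 0 c) 0 = derivWithin w (Ico 0 c) 0) (ht : t ∈ Ioo 0 c)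
    (hs : s ∈ Ioo 0 c) : energy K f u t = energy K f w s := by
  have hE {v : ℝ → ℝ} (hv : IsPosSolOn K f v (Ioo 0 c)) (r : ℝ) (hr : r ∈ Ioo 0 c) :
      energy K f v r = energy K f v t :=
    hv.energy_eq hK hK' hf isOpen_Ioo isPreconnected_Ioo hr ht
  have hlim := tendsto_nhds_unique (hu.tendsto_potential hK hc hu₁ hu₀ (hE hu))
    (h₀ ▸ hw.tendsto_potential hK hc hw₁ hw₀ (hE hw))
  rw [hE hw s hs]
  linarith

variable (hK : ContDiff ℝ 1 K) (hK' : ∀ p, 0 < deriv K p)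
  (hf : LocallyLipschitzOn (Ioi 0) f)
  (hu : IsPosSolOn K f u (Ioo 0 c)) (hw : IsPosSolOn K f w (Ioo 0 c))
  (hwc : ContinuousOn w (Ico 0 c)) (hw₀ : w 0 = 0)
include hK hK' hf hu hw hwc hw₀

theorem deriv_ne_of_eq_of_lt (hs : 0 < s) (hst : s < t) (htc : t < c) (heq : u t = w s) :
    deriv u t ≠ deriv w s := by
  intro hderiv
  have hv : IsPosSolOn K f (fun r => w (r + (s - t))) (Ioo (t - s) c) :=
    (hw.comp_add_const (s - t)).mono fun r hr => by
      simp only [mem_preimage, mem_Ioo] at hr ⊢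
      constructor <;> linarith [hr.1, hr.2]
  have heqOn : EqOn u (fun r => w (r + (s - t))) (Ioo (t - s) c) :=
    (hu.mono fun r hr => ⟨by linarith [hr.1], hr.2⟩).eqOn hK hK' hf hv isOpen_Ioo
      isPreconnected_Ioo ⟨by linarith, htc⟩ (by simp [heq])
      (by simp [deriv_comp_add_const, hderiv])
  have hclosure := heqOn.of_subset_closure (t := Ico (t - s) c)
    (hu.contDiffOn.continuousOn.mono fun r hr => ⟨by linarith [hr.1], hr.2⟩)
    (hwc.comp (continuous_add_const _).continuousOn fun r hr =>
      ⟨by linarith [hr.1], by linarith [hr.2]⟩)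
    Ioo_subset_Ico_self (by rw [closure_Ioo (by linarith)]; exact Ico_subset_Icc_self)
  have hzero : u (t - s) = 0 := by simpa [hw₀] using hclosure (left_mem_Ico.2 (by linarith))
  exact (hu.pos (t - s) ⟨by linarith, by linarith⟩).ne' hzero

theorem deriv_ne_neg_of_eq (hKeven : ∀ p, deriv K (-p) = deriv K p)
    (hs : 0 < s) (ht : 0 < t) (hstc : t + s < c) (heq : u t = w s) :
    deriv u t ≠ -deriv w s := by
  intro hderiv
  have hv : IsPosSolOn K f (fun r => w (t + s - r)) (Ioo 0 (t + s)) :=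
    (hw.comp_const_sub (hK.differentiable one_ne_zero) hKeven (t + s)).mono fun r hr => by
      simp only [mem_preimage, mem_Ioo] at hr ⊢
      constructor <;> linarith [hr.1, hr.2]
  have heqOn : EqOn u (fun r => w (t + s - r)) (Ioo 0 (t + s)) :=
    (hu.mono fun r hr => ⟨hr.1, by linarith [hr.2]⟩).eqOn hK hK' hf hv isOpen_Ioo
      isPreconnected_Ioo ⟨ht, by linarith⟩ (by simp [heq])
      (by simp [deriv_comp_const_sub, hderiv])
  have hclosure := heqOn.of_subset_closure (t := Ioc 0 (t + s))
    (hu.contDiffOn.continuousOn.mono fun r hr => ⟨hr.1, by linarith [hr.2]⟩)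
    (hwc.comp (continuous_const.sub continuous_id).continuousOn fun r hr =>
      ⟨by linarith [hr.2], by linarith [hr.1]⟩)
    Ioo_subset_Ioc_self (by rw [closure_Ioo (by linarith)]; exact Ioc_subset_Icc_self)
  have hzero : u (t + s) = 0 := by simpa [hw₀] using hclosure (right_mem_Ioc.2 (by linarith))
  exact (hu.pos (t + s) ⟨by linarith, hstc⟩).ne' hzero

theorem le_of_forall_abs_deriv_eq (hKeven : ∀ p, deriv K (-p) = deriv K p)
    (hmatch : ∀ t ∈ Ioo 0 c, ∀ s ∈ Ioo 0 c, u t = w s → |deriv u t| = |deriv w s|)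
    (ht : t ∈ Ioo 0 (c / 2)) : w t ≤ u t := by
  obtain ⟨ht₀, htc⟩ := ht
  by_contra! hlt
  obtain ⟨s, ⟨hs₀, hst⟩, hws⟩ : ∃ s ∈ Ioo 0 t, w s = u t :=
    intermediate_value_Ioo ht₀.le (hwc.mono fun r hr => ⟨hr.1, by linarith [hr.2]⟩)
      ⟨by rw [hw₀]; exact hu.pos t ⟨ht₀, by linarith⟩, hlt⟩
  rcases abs_eq_abs.1 (hmatch t ⟨ht₀, by linarith⟩ s ⟨hs₀, by linarith⟩ hws.symm) with h | h
  · exact deriv_ne_of_eq_of_lt hK hK' hf hu hw hwc hw₀ hs₀ hst (by linarith) hws.symm h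
  · exact deriv_ne_neg_of_eq hK hK' hf hu hw hwc hw₀ hKeven hs₀ ht₀ (by linarith) hws.symm h

end Endpoint

end IsPosSolOn

/-- Lemma 5.3 of Li–Nirenberg, extending Lemma 2.3. -/
theorem stmt_12 (K : ℝ → ℝ) (hK : ContDiff ℝ 1 K) (hK' : ∀ p : ℝ, 0 < deriv K p)
    (hKeven : ∀ p : ℝ, deriv K (-p) = deriv K p)
    (f : ℝ → ℝ)
    (hf : ∀ s : Set ℝ, s ⊆ Set.Ioi 0 → IsCompact s → ∃ L : NNReal, LipschitzOnWith L f s)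
    (c : ℝ) (hc : 0 < c) (u w : ℝ → ℝ)
    (hu1 : ContDiffOn ℝ 1 u (Set.Ico 0 c)) (hw1 : ContDiffOn ℝ 1 w (Set.Ico 0 c))
    (hupos : ∀ t ∈ Set.Ioo 0 c, 0 < u t) (hwpos : ∀ t ∈ Set.Ioo 0 c, 0 < w t)
    (hueq : ∀ t ∈ Set.Ioo 0 c, HasDerivAt (fun τ => K (deriv u τ)) (f (u t)) t)
    (hweq : ∀ t ∈ Set.Ioo 0 c, HasDerivAt (fun τ => K (deriv w τ)) (f (w t)) t)
    (hu0 : u 0 = 0) (hw0 : w 0 = 0)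
    (h'0 : derivWithin u (Set.Ico 0 c) 0 = derivWithin w (Set.Ico 0 c) 0) :
    ∀ t ∈ Set.Ico 0 c, u t = w t := by
  have hf' : LocallyLipschitzOn (Ioi 0) f := .of_forall_isCompact isOpen_Ioi hf
  have hu : IsPosSolOn K f u (Ioo 0 c) := ⟨hu1.mono Ioo_subset_Ico_self, hupos, hueq⟩
  have hw : IsPosSolOn K f w (Ioo 0 c) := ⟨hw1.mono Ioo_subset_Ico_self, hwpos, hweq⟩
  have hmatch : ∀ t ∈ Ioo 0 c, ∀ s ∈ Ioo 0 c, u t = w s → |deriv u t| = |deriv w s| := by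
    intro t ht s hs h
    refine abs_eq_abs_of_kineticEnergy_eq hK hK' hKeven ?_
    simpa [energy, h] using
      hu.energy_eq_of_derivWithin_eq hK hK' hf'.continuousOn hc hw hu1 hw1 hu0 hw0 h'0 ht hs
  have hnear : EqOn u w (Ioo 0 (c / 2)) := fun t ht =>
    le_antisymm
      (IsPosSolOn.le_of_forall_abs_deriv_eq hK hK' hf' hw hu hu1.continuousOn hu0 hKeven
        (fun t ht s hs h => (hmatch s hs t ht h.symm).symm) ht)
      (IsPosSolOn.le_of_forall_abs_deriv_eq hK hK' hf' hu hw hw1.continuousOn hw0 hKeven hmatch ht)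
  have hquarter : c / 4 ∈ Ioo 0 (c / 2) := ⟨by linarith, by linarith⟩
  have hall : EqOn u w (Ioo 0 c) :=
    hu.eqOn hK hK' hf' hw isOpen_Ioo isPreconnected_Ioo ⟨hquarter.1, by linarith⟩
      (hnear hquarter) (hnear.eventuallyEq_of_mem (Ioo_mem_nhds hquarter.1 hquarter.2)).deriv_eq
  rintro t ⟨ht₀, htc⟩
  rcases ht₀.eq_or_lt with rfl | ht₀
  · rw [hu0, hw0]
  · exact hall ⟨ht₀, htc⟩
end

section
/- Let K : ℝ → ℝ be C¹ with K'(p) > 0 for all p ∈ ℝ. Let b > 0 and let u, v be real functions that are C² on (0,b) and C¹ on [0,b], satisfying u(t) ≥ v(t) > 0 for all t ∈ (0,b]. Assume that either (u'(t) > 0 and v'(t) ≥ 0 for all t ∈ (0,b]) or (u'(t) ≥ 0 and v'(t) > 0 for all t ∈ (0,b]), and that u(0) = u'(0) = 0. Assume: whenever u(t) = v(s) with 0 < t < s < b, one has K'(u'(t))·u''(t) ≤ K'(v'(s))·v''(s). Then u(t) = v(t) for all t ∈ [0,b]. -/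
/-!
Let `G` be the primitive of `p ↦ p K'(p)` vanishing at `0`, so that `(G ∘ f')' = f' (K ∘ f')'`.
Parametrize the pairs `t ≤ s` with `u t = v s` by a curve `(α, β)`: `α = u⁻¹ ∘ v, β = id` when
`u' > 0`, and `α = id, β = v⁻¹ ∘ u` when `v' > 0` (as long as `u < v b`). Along it,
`Φ = G(u' ∘ α) - G(v' ∘ β)` has derivative `(u ∘ α)' (K'(u'(α)) u''(α) - K'(v'(β)) v''(β))`.
Where `Φ > 0` we have `u'(α) > v'(β)`, so `α ≠ β` (at a contact point `u' = v'`), hence `α < β`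
and the hypothesis makes `Φ` nonincreasing there; as `Φ → G(0) - G(v'(0)) ≤ 0` at `0`, `Φ ≤ 0`,
i.e. `u'(α) ≤ v'(β)`. Differentiating `u ∘ α = v ∘ β` then gives `β' ≤ α'`, and `β - α ≥ 0`
tends to `0`, so `α = β`: `u = v`.
-/

open Set Filter Topology Function

noncomputable def integralMulDeriv (K : ℝ → ℝ) (p : ℝ) : ℝ := ∫ q in (0)..p, q * deriv K q

section integralMulDeriv

variable {K : ℝ → ℝ}

lemma hasDerivAt_integralMulDeriv (hK : ContDiff ℝ 1 K) (p : ℝ) :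
    HasDerivAt (integralMulDeriv K) (p * deriv K p) p :=
  ((continuous_id.mul (hK.continuous_deriv le_rfl)).integral_hasStrictDerivAt 0 p).hasDerivAt

lemma continuous_integralMulDeriv (hK : ContDiff ℝ 1 K) : Continuous (integralMulDeriv K) :=
  continuous_iff_continuousAt.2 fun p => (hasDerivAt_integralMulDeriv hK p).continuousAt

lemma strictMonoOn_integralMulDeriv (hK : ContDiff ℝ 1 K) (hK' : ∀ p, 0 < deriv K p) :
    StrictMonoOn (integralMulDeriv K) (Ici 0) := by
  refine strictMonoOn_of_deriv_pos (convex_Ici 0) (continuous_integralMulDeriv hK).continuousOn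
    fun p hp => ?_
  rw [interior_Ici] at hp
  rw [(hasDerivAt_integralMulDeriv hK p).deriv]
  exact mul_pos hp (hK' p)

lemma hasDerivAt_integralMulDeriv_deriv_comp (hK : ContDiff ℝ 1 K) {f α : ℝ → ℝ} {x : ℝ}
    (hf : DifferentiableAt ℝ (deriv f) (α x)) (hα : DifferentiableAt ℝ α x) :
    HasDerivAt (fun y => integralMulDeriv K (deriv f (α y)))
      (deriv f (α x) * deriv α x * (deriv K (deriv f (α x)) * deriv (deriv f) (α x))) x :=
  ((hasDerivAt_integralMulDeriv hK _).comp x (hf.hasDerivAt.comp x hα.hasDerivAt)).congr_deriv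
    (by simp only [Function.comp_apply]; ring)

end integralMulDeriv

lemma nonpos_of_deriv_nonpos_of_pos {Φ : ℝ → ℝ} {a c L : ℝ}
    (hΦ : DifferentiableOn ℝ Φ (Ioo a c)) (hΦ' : ∀ x ∈ Ioo a c, 0 < Φ x → deriv Φ x ≤ 0)
    (hlim : Tendsto Φ (𝓝[>] a) (𝓝 L)) (hL : L ≤ 0) : ∀ x ∈ Ioo a c, Φ x ≤ 0 := by
  intro x hx
  refine le_of_forall_pos_le_add fun ε hε => ?_
  obtain ⟨y, hΦy, hy⟩ : ∃ y, Φ y < ε / 2 ∧ y ∈ Ioo a x :=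
    ((hlim.eventually (gt_mem_nhds (by linarith))).and (Ioo_mem_nhdsGT hx.1)).exists
  have hyx : Icc y x ⊆ Ioo a c := Icc_subset_Ioo hy.1 hx.2
  have hdiff : ∀ z ∈ Icc y x, HasDerivAt Φ (deriv Φ z) z := fun z hz =>
    (hΦ.differentiableAt (isOpen_Ioo.mem_nhds (hyx hz))).hasDerivAt
  -- the fencing lemma needs a strict bound, hence a barrier of positive slope from `ε / 2` to `ε`
  have hslope : 0 < ε / 2 / (x - y) := div_pos (half_pos hε) (sub_pos.2 hy.2)
  have hfence := image_le_of_deriv_right_lt_deriv_boundary' (f := Φ) (f' := deriv Φ)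
    (B := fun z => ε / 2 + ε / 2 / (x - y) * (z - y)) (B' := fun _ => ε / 2 / (x - y))
    (fun z hz => (hdiff z hz).continuousAt.continuousWithinAt)
    (fun z hz => (hdiff z (Ico_subset_Icc_self hz)).hasDerivWithinAt) (by simpa using hΦy.le)
    (by fun_prop)
    (fun z _ => ((((hasDerivAt_id z).sub_const y).const_mul _).const_add _).hasDerivWithinAt
      |>.congr_deriv (by simp))
    (fun z hz hΦz => (hΦ' z (hyx (Ico_subset_Icc_self hz)) (by
      rw [hΦz]; have := mul_nonneg hslope.le (sub_nonneg.2 hz.1); linarith)).trans_lt hslope)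
    (right_mem_Icc.2 hy.2.le)
  have : ε / 2 / (x - y) * (x - y) = ε / 2 := div_mul_cancel₀ _ (sub_pos.2 hy.2).ne'
  linarith

lemma deriv_eq_of_eventuallyLE_of_eq {f g : ℝ → ℝ} {x : ℝ} (hf : DifferentiableAt ℝ f x)
    (hg : DifferentiableAt ℝ g x) (hle : g ≤ᶠ[𝓝 x] f) (heq : f x = g x) :
    deriv f x = deriv g x := by
  have hmin : IsLocalMin (fun y => f y - g y) x := by
    filter_upwards [hle] with y hy
    simpa only [heq, sub_self, sub_nonneg] using hy
  have := hmin.deriv_eq_zero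
  rw [deriv_fun_sub hf hg] at this
  linarith

lemma tendsto_deriv_nhdsGT_of_contDiffOn_Icc {f : ℝ → ℝ} {a b : ℝ} (hab : a < b)
    (hf : ContDiffOn ℝ 1 f (Icc a b)) :
    Tendsto (deriv f) (𝓝[>] a) (𝓝 (derivWithin f (Icc a b) a)) := by
  have hcont := hf.continuousOn_derivWithin (uniqueDiffOn_Icc hab) le_rfl a (left_mem_Icc.2 hab.le)
  rw [← nhdsWithin_Ioo_eq_nhdsGT hab]
  refine (hcont.mono Ioo_subset_Icc_self).congr' ?_
  filter_upwards [self_mem_nhdsWithin] with x hx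
  exact derivWithin_of_mem_nhds (Icc_mem_nhds hx.1 hx.2)

section invFunOn

variable {f : ℝ → ℝ} {a b y : ℝ}

lemma ContinuousOn.apply_invFunOn_Icc (hf : ContinuousOn f (Icc a b)) (hab : a ≤ b)
    (hy : y ∈ Icc (f a) (f b)) : f (invFunOn f (Icc a b) y) = y :=
  invFunOn_eq (intermediate_value_Icc hab hf hy)

lemma ContinuousOn.invFunOn_Icc_mem_Ioo (hf : ContinuousOn f (Icc a b)) (hab : a ≤ b)
    (hy : y ∈ Ioo (f a) (f b)) : invFunOn f (Icc a b) y ∈ Ioo a b := by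
  have hmem := invFunOn_mem (intermediate_value_Icc hab hf (Ioo_subset_Icc_self hy))
  have happ := hf.apply_invFunOn_Icc hab (Ioo_subset_Icc_self hy)
  refine ⟨hmem.1.lt_of_ne fun h => hy.1.ne ?_, hmem.2.lt_of_ne fun h => hy.2.ne' ?_⟩
  · rwa [← h] at happ
  · rwa [h] at happ

lemma StrictMonoOn.hasDerivAt_invFunOn_Icc (hfm : StrictMonoOn f (Icc a b))
    (hf : ContinuousOn f (Icc a b)) (hab : a ≤ b) (hy : y ∈ Ioo (f a) (f b)) {f' : ℝ}
    (hf' : HasDerivAt f f' (invFunOn f (Icc a b) y)) (hf'0 : f' ≠ 0) :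
    HasDerivAt (invFunOn f (Icc a b)) f'⁻¹ y := by
  set g := invFunOn f (Icc a b)
  have hg : ∀ z ∈ Ioo (f a) (f b), g z ∈ Ioo a b ∧ f (g z) = z := fun z hz =>
    ⟨hf.invFunOn_Icc_mem_Ioo hab hz, hf.apply_invFunOn_Icc hab (Ioo_subset_Icc_self hz)⟩
  have hmono : MonotoneOn g (Ioo (f a) (f b)) := fun z hz w hw hzw => by
    rw [← hfm.le_iff_le (Ioo_subset_Icc_self (hg z hz).1) (Ioo_subset_Icc_self (hg w hw).1),
      (hg z hz).2, (hg w hw).2]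
    exact hzw
  have himage : Ioo a b ⊆ g '' Ioo (f a) (f b) := fun x hx =>
    ⟨f x, ⟨hfm (left_mem_Icc.2 hab) (Ioo_subset_Icc_self hx) hx.1,
      hfm (Ioo_subset_Icc_self hx) (right_mem_Icc.2 hab) hx.2⟩,
      hfm.injOn.leftInvOn_invFunOn (Ioo_subset_Icc_self hx)⟩
  have hgy := (hg y hy).1
  refine hf'.of_local_left_inverse (continuousAt_of_monotoneOn_of_image_mem_nhds hmono
    (Ioo_mem_nhds hy.1 hy.2) (mem_of_superset (Ioo_mem_nhds hgy.1 hgy.2) himage)) hf'0 ?_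
  filter_upwards [Ioo_mem_nhds hy.1 hy.2] with z hz using (hg z hz).2

end invFunOn

structure IsLevelMatching (u v α β : ℝ → ℝ) (b c : ℝ) : Prop where
  mapsTo_fst : MapsTo α (Ioo 0 c) (Ioo 0 b)
  mapsTo_snd : MapsTo β (Ioo 0 c) (Ioo 0 b)
  fst_le_snd : ∀ x ∈ Ioo 0 c, α x ≤ β x
  apply_fst_eq : ∀ x ∈ Ioo 0 c, u (α x) = v (β x)
  differentiableOn_fst : DifferentiableOn ℝ α (Ioo 0 c)
  differentiableOn_snd : DifferentiableOn ℝ β (Ioo 0 c)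
  deriv_fst_nonneg : ∀ x ∈ Ioo 0 c, 0 ≤ deriv α x
  tendsto_fst : Tendsto α (𝓝[>] 0) (𝓝[>] 0)
  tendsto_snd : Tendsto β (𝓝[>] 0) (𝓝[>] 0)

namespace IsLevelMatching

variable {u v α β : ℝ → ℝ} {b c : ℝ}

lemma deriv_mul_eq (M : IsLevelMatching u v α β b c) (hu : DifferentiableOn ℝ u (Ioo 0 b))
    (hv : DifferentiableOn ℝ v (Ioo 0 b)) {x : ℝ} (hx : x ∈ Ioo 0 c) :
    deriv u (α x) * deriv α x = deriv v (β x) * deriv β x := by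
  have hx' := isOpen_Ioo.mem_nhds hx
  have hα := (hu.differentiableAt (isOpen_Ioo.mem_nhds (M.mapsTo_fst hx))).hasDerivAt.comp x
    (M.differentiableOn_fst.differentiableAt hx').hasDerivAt
  have hβ := (hv.differentiableAt (isOpen_Ioo.mem_nhds (M.mapsTo_snd hx))).hasDerivAt.comp x
    (M.differentiableOn_snd.differentiableAt hx').hasDerivAt
  refine hα.unique (hβ.congr_of_eventuallyEq ?_)
  filter_upwards [hx'] with y hy using M.apply_fst_eq y hy

lemma fst_lt_snd_of_deriv_lt (M : IsLevelMatching u v α β b c)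
    (hu : DifferentiableOn ℝ u (Ioo 0 b)) (hv : DifferentiableOn ℝ v (Ioo 0 b))
    (hvu : ∀ t ∈ Ioo 0 b, v t ≤ u t) {x : ℝ} (hx : x ∈ Ioo 0 c)
    (hlt : deriv v (β x) < deriv u (α x)) : α x < β x := by
  refine (M.fst_le_snd x hx).lt_of_ne fun h => hlt.ne ?_
  have hβ := isOpen_Ioo.mem_nhds (M.mapsTo_snd hx)
  rw [h] at hlt ⊢
  refine (deriv_eq_of_eventuallyLE_of_eq (hu.differentiableAt hβ) (hv.differentiableAt hβ) ?_
    (h ▸ M.apply_fst_eq x hx)).symm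
  filter_upwards [hβ] with t ht using hvu t ht

variable {K : ℝ → ℝ}

lemma hasDerivAt_integralMulDeriv_sub (M : IsLevelMatching u v α β b c) (hK : ContDiff ℝ 1 K)
    (hu2 : ContDiffOn ℝ 2 u (Ioo 0 b)) (hv2 : ContDiffOn ℝ 2 v (Ioo 0 b)) {x : ℝ}
    (hx : x ∈ Ioo 0 c) :
    HasDerivAt (fun y => integralMulDeriv K (deriv u (α y)) - integralMulDeriv K (deriv v (β y)))
      (deriv u (α x) * deriv α x * (deriv K (deriv u (α x)) * deriv (deriv u) (α x) -
        deriv K (deriv v (β x)) * deriv (deriv v) (β x))) x := by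
  have hx' := isOpen_Ioo.mem_nhds hx
  have hu'd := (hu2.deriv_of_isOpen isOpen_Ioo (by norm_num : (1 : WithTop ℕ∞) + 1 ≤ 2))
    |>.differentiableOn one_ne_zero
  have hv'd := (hv2.deriv_of_isOpen isOpen_Ioo (by norm_num : (1 : WithTop ℕ∞) + 1 ≤ 2))
    |>.differentiableOn one_ne_zero
  refine ((hasDerivAt_integralMulDeriv_deriv_comp hK
    (hu'd.differentiableAt (isOpen_Ioo.mem_nhds (M.mapsTo_fst hx)))
    (M.differentiableOn_fst.differentiableAt hx')).sub
    (hasDerivAt_integralMulDeriv_deriv_comp hK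
    (hv'd.differentiableAt (isOpen_Ioo.mem_nhds (M.mapsTo_snd hx)))
    (M.differentiableOn_snd.differentiableAt hx'))).congr_deriv ?_
  rw [← M.deriv_mul_eq (hu2.differentiableOn (by norm_num)) (hv2.differentiableOn (by norm_num))
    hx]
  ring

lemma deriv_fst_le_deriv_snd (M : IsLevelMatching u v α β b c) (hK : ContDiff ℝ 1 K)
    (hK' : ∀ p, 0 < deriv K p) (hb : 0 < b) (hu2 : ContDiffOn ℝ 2 u (Ioo 0 b))
    (hv2 : ContDiffOn ℝ 2 v (Ioo 0 b)) (hu1 : ContDiffOn ℝ 1 u (Icc 0 b))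
    (hv1 : ContDiffOn ℝ 1 v (Icc 0 b)) (hu'0 : derivWithin u (Icc 0 b) 0 = 0)
    (hu' : ∀ t ∈ Ioo 0 b, 0 ≤ deriv u t) (hv' : ∀ t ∈ Ioo 0 b, 0 ≤ deriv v t)
    (hvu : ∀ t ∈ Ioo 0 b, v t ≤ u t)
    (hmain : ∀ t s : ℝ, 0 < t → t < s → s < b → u t = v s →
      deriv K (deriv u t) * deriv (deriv u) t ≤ deriv K (deriv v s) * deriv (deriv v) s) :
    ∀ x ∈ Ioo 0 c, deriv u (α x) ≤ deriv v (β x) := by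
  have hG := strictMonoOn_integralMulDeriv hK hK'
  have hGc := continuous_integralMulDeriv hK
  have hu'lim := tendsto_deriv_nhdsGT_of_contDiffOn_Icc hb hu1
  rw [hu'0] at hu'lim
  have hv'lim := tendsto_deriv_nhdsGT_of_contDiffOn_Icc hb hv1
  have hv'0 : 0 ≤ derivWithin v (Icc 0 b) 0 :=
    ge_of_tendsto hv'lim (eventually_of_mem (Ioo_mem_nhdsGT hb) hv')
  have hΦ := fun x (hx : x ∈ Ioo 0 c) => M.hasDerivAt_integralMulDeriv_sub hK hu2 hv2 hx
  have hΦle := nonpos_of_deriv_nonpos_of_pos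
    (fun x hx => (hΦ x hx).differentiableAt.differentiableWithinAt) (fun x hx hpos => ?_)
    ((hGc.tendsto 0).comp (hu'lim.comp M.tendsto_fst) |>.sub
      ((hGc.tendsto _).comp (hv'lim.comp M.tendsto_snd)))
    (sub_nonpos.2 (hG.monotoneOn (mem_Ici.2 le_rfl) hv'0 hv'0))
  · exact fun x hx => (hG.le_iff_le (hu' _ (M.mapsTo_fst hx)) (hv' _ (M.mapsTo_snd hx))).1
      (sub_nonpos.1 (hΦle x hx))
  have hlt : deriv v (β x) < deriv u (α x) :=
    (hG.lt_iff_lt (hv' _ (M.mapsTo_snd hx)) (hu' _ (M.mapsTo_fst hx))).1 (sub_pos.1 hpos)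
  have hαβ := M.fst_lt_snd_of_deriv_lt (hu2.differentiableOn (by norm_num))
    (hv2.differentiableOn (by norm_num)) hvu hx hlt
  rw [(hΦ x hx).deriv]
  exact mul_nonpos_of_nonneg_of_nonpos (mul_nonneg (hu' _ (M.mapsTo_fst hx))
    (M.deriv_fst_nonneg x hx)) (sub_nonpos.2 (hmain _ _ (M.mapsTo_fst hx).1 hαβ
      (M.mapsTo_snd hx).2 (M.apply_fst_eq x hx)))

lemma fst_eq_snd (M : IsLevelMatching u v α β b c) (hu : DifferentiableOn ℝ u (Ioo 0 b))
    (hv : DifferentiableOn ℝ v (Ioo 0 b)) (hle : ∀ x ∈ Ioo 0 c, deriv u (α x) ≤ deriv v (β x))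
    (hpos : ∀ x ∈ Ioo 0 c, 0 < deriv u (α x) ∨ 0 < deriv v (β x)) :
    ∀ x ∈ Ioo 0 c, α x = β x := by
  have hdiff := M.differentiableOn_snd.sub M.differentiableOn_fst
  have hgap := nonpos_of_deriv_nonpos_of_pos hdiff (fun x hx _ => ?_)
    ((tendsto_nhds_of_tendsto_nhdsWithin M.tendsto_snd).sub
      (tendsto_nhds_of_tendsto_nhdsWithin M.tendsto_fst)) (sub_self 0).le
  · exact fun x hx => le_antisymm (M.fst_le_snd x hx) (sub_nonpos.1 (hgap x hx))
  have hx' := isOpen_Ioo.mem_nhds hx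
  rw [deriv_sub (M.differentiableOn_snd.differentiableAt hx')
    (M.differentiableOn_fst.differentiableAt hx')]
  -- `u'(α) α' = v'(β) β'` with `u'(α) ≤ v'(β)` and `v'(β) > 0` forces `β' ≤ α'`
  have hv'pos : 0 < deriv v (β x) := (hpos x hx).elim (fun h => h.trans_le (hle x hx)) id
  have := M.deriv_mul_eq hu hv hx
  nlinarith [hle x hx, M.deriv_fst_nonneg x hx]

end IsLevelMatching

section construction

variable {u v : ℝ → ℝ} {b : ℝ}

lemma isLevelMatching_invFunOn_left (hb : 0 < b) (huc : ContinuousOn u (Icc 0 b))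
    (hud : DifferentiableOn ℝ u (Ioo 0 b)) (hu' : ∀ t ∈ Ioo 0 b, 0 < deriv u t)
    (hvd : DifferentiableOn ℝ v (Ioo 0 b)) (hv' : ∀ t ∈ Ioo 0 b, 0 ≤ deriv v t)
    (huv : ∀ t ∈ Ioo 0 b, 0 < v t ∧ v t ≤ u t) (hu0 : u 0 = 0) :
    IsLevelMatching u v (fun s => invFunOn u (Icc 0 b) (v s)) id b b := by
  have hum : StrictMonoOn u (Icc 0 b) := strictMonoOn_of_deriv_pos (convex_Icc 0 b) huc
    fun t ht => hu' t (by rwa [interior_Icc] at ht)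
  have hvI : ∀ s ∈ Ioo 0 b, v s ∈ Ioo (u 0) (u b) := fun s hs =>
    ⟨by rw [hu0]; exact (huv s hs).1, (huv s hs).2.trans_lt
      (hum (Ioo_subset_Icc_self hs) (right_mem_Icc.2 hb.le) hs.2)⟩
  have hmem : ∀ s ∈ Ioo 0 b, invFunOn u (Icc 0 b) (v s) ∈ Ioo 0 b := fun s hs =>
    huc.invFunOn_Icc_mem_Ioo hb.le (hvI s hs)
  have happ : ∀ s ∈ Ioo 0 b, u (invFunOn u (Icc 0 b) (v s)) = v s := fun s hs =>
    huc.apply_invFunOn_Icc hb.le (Ioo_subset_Icc_self (hvI s hs))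
  have hle : ∀ s ∈ Ioo 0 b, invFunOn u (Icc 0 b) (v s) ≤ s := fun s hs =>
    (hum.le_iff_le (Ioo_subset_Icc_self (hmem s hs)) (Ioo_subset_Icc_self hs)).1
      ((happ s hs).trans_le (huv s hs).2)
  have hderiv : ∀ s ∈ Ioo 0 b, HasDerivAt (fun s => invFunOn u (Icc 0 b) (v s))
      ((deriv u (invFunOn u (Icc 0 b) (v s)))⁻¹ * deriv v s) s := fun s hs =>
    (hum.hasDerivAt_invFunOn_Icc huc hb.le (hvI s hs)
      (hud.differentiableAt (isOpen_Ioo.mem_nhds (hmem s hs))).hasDerivAt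
      (hu' _ (hmem s hs)).ne').comp s (hvd.differentiableAt (isOpen_Ioo.mem_nhds hs)).hasDerivAt
  have hnear : ∀ᶠ s in 𝓝[>] 0, s ∈ Ioo 0 b := Ioo_mem_nhdsGT hb
  refine ⟨hmem, fun s hs => hs, hle, happ,
    fun s hs => (hderiv s hs).differentiableAt.differentiableWithinAt, differentiableOn_id,
    fun s hs => (hderiv s hs).deriv ▸ mul_nonneg (inv_nonneg.2 (hu' _ (hmem s hs)).le) (hv' s hs),
    tendsto_nhdsWithin_iff.2 ⟨?_, hnear.mono fun s hs => (hmem s hs).1⟩, tendsto_id⟩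
  exact tendsto_of_tendsto_of_tendsto_of_le_of_le' tendsto_const_nhds
    (tendsto_id.mono_left nhdsWithin_le_nhds) (hnear.mono fun s hs => (hmem s hs).1.le)
    (hnear.mono hle)

lemma isLevelMatching_invFunOn_right {c : ℝ} (hc : 0 < c) (hcb : c ≤ b)
    (hvc : ContinuousOn v (Icc 0 b)) (hvm : StrictMonoOn v (Icc 0 b))
    (hvd : DifferentiableOn ℝ v (Ioo 0 b)) (hv' : ∀ t ∈ Ioo 0 b, 0 < deriv v t)
    (huc : ContinuousOn u (Icc 0 b)) (hud : DifferentiableOn ℝ u (Ioo 0 b))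
    (huv : ∀ t ∈ Ioo 0 b, 0 < v t ∧ v t ≤ u t) (hu0 : u 0 = 0)
    (hlt : ∀ t ∈ Ioo 0 c, u t < v b) :
    IsLevelMatching u v id (fun t => invFunOn v (Icc 0 b) (u t)) b c := by
  have hb : 0 < b := hc.trans_le hcb
  have hsub : Ioo 0 c ⊆ Ioo 0 b := Ioo_subset_Ioo_right hcb
  have huI : ∀ t ∈ Ioo 0 c, u t ∈ Ioo (v 0) (v b) := fun t ht =>
    ⟨(hvm (left_mem_Icc.2 hb.le) (Ioo_subset_Icc_self (hsub ht)) ht.1).trans_le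
      (huv t (hsub ht)).2, hlt t ht⟩
  have hmem : ∀ t ∈ Ioo 0 c, invFunOn v (Icc 0 b) (u t) ∈ Ioo 0 b := fun t ht =>
    hvc.invFunOn_Icc_mem_Ioo hb.le (huI t ht)
  have happ : ∀ t ∈ Ioo 0 c, v (invFunOn v (Icc 0 b) (u t)) = u t := fun t ht =>
    hvc.apply_invFunOn_Icc hb.le (Ioo_subset_Icc_self (huI t ht))
  have hderiv : ∀ t ∈ Ioo 0 c, HasDerivAt (fun t => invFunOn v (Icc 0 b) (u t))
      ((deriv v (invFunOn v (Icc 0 b) (u t)))⁻¹ * deriv u t) t := fun t ht =>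
    (hvm.hasDerivAt_invFunOn_Icc hvc hb.le (huI t ht)
      (hvd.differentiableAt (isOpen_Ioo.mem_nhds (hmem t ht))).hasDerivAt
      (hv' _ (hmem t ht)).ne').comp t
      (hud.differentiableAt (isOpen_Ioo.mem_nhds (hsub ht))).hasDerivAt
  have hnear : ∀ᶠ t in 𝓝[>] 0, t ∈ Ioo 0 c := Ioo_mem_nhdsGT hc
  have hulim : Tendsto u (𝓝[>] 0) (𝓝 0) := by
    have := ((huc.continuousWithinAt (left_mem_Icc.2 hb.le)).mono Ioo_subset_Icc_self).tendsto
    rwa [nhdsWithin_Ioo_eq_nhdsGT hb, hu0] at this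
  refine ⟨fun t ht => hsub ht, hmem,
    fun t ht => (hvm.le_iff_le (Ioo_subset_Icc_self (hsub ht)) (Ioo_subset_Icc_self (hmem t ht))).1
      ((huv t (hsub ht)).2.trans_eq (happ t ht).symm),
    fun t ht => (happ t ht).symm, differentiableOn_id,
    fun t ht => (hderiv t ht).differentiableAt.differentiableWithinAt,
    fun t _ => by simp, tendsto_id,
    tendsto_nhdsWithin_iff.2 ⟨?_, hnear.mono fun t ht => (hmem t ht).1⟩⟩
  refine tendsto_order.2 ⟨fun a ha => hnear.mono fun t ht => ha.trans (hmem t ht).1,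
    fun ε hε => ?_⟩
  -- `v (β t) = u t` is eventually below the positive level `v δ`, so `β t < δ`
  set δ := min ε b / 2 with hδ_def
  have hδ : δ ∈ Ioo 0 b := ⟨by positivity, by linarith [min_le_right ε b]⟩
  filter_upwards [hulim.eventually (gt_mem_nhds (huv δ hδ).1), hnear] with t hut ht
  have hβδ : invFunOn v (Icc 0 b) (u t) < δ :=
    (hvm.lt_iff_lt (Ioo_subset_Icc_self (hmem t ht)) (Ioo_subset_Icc_self hδ)).1
      ((happ t ht).trans_lt hut)
  linarith [min_le_left ε b, (hmem t ht).1]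

end construction

lemma eqOn_Ioo_of_eqOn_sublevel {u v : ℝ → ℝ} {b : ℝ} (hb : 0 < b)
    (hu : ContinuousOn u (Icc 0 b)) (hv : ContinuousOn v (Icc 0 b))
    (hvm : StrictMonoOn v (Icc 0 b)) (hu0 : u 0 < v b) (hvu : v b ≤ u b)
    (h : ∀ c ∈ Ioc 0 b, (∀ t ∈ Ioo 0 c, u t < v b) → EqOn u v (Ioo 0 c)) :
    EqOn u v (Ioo 0 b) := by
  -- `sInf F` is the first time `u` reaches `v b`; there `u = v`, so it is `b` as `v` is injective
  set F := Icc 0 b ∩ u ⁻¹' Ici (v b)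
  have hF : IsClosed F := hu.preimage_isClosed_of_isClosed isClosed_Icc isClosed_Ici
  have hFbdd : BddBelow F := ⟨0, fun t ht => ht.1.1⟩
  have hcF : sInf F ∈ F := hF.csInf_mem ⟨b, right_mem_Icc.2 hb.le, hvu⟩ hFbdd
  have hc0 : 0 < sInf F := hcF.1.1.lt_of_ne fun h0 => (h0 ▸ hcF.2 : v b ≤ u 0).not_gt hu0
  have heq := h (sInf F) ⟨hc0, hcF.1.2⟩ fun t ht => not_le.1 fun hle =>
    notMem_of_lt_csInf ht.2 hFbdd ⟨⟨ht.1.le, ht.2.le.trans hcF.1.2⟩, hle⟩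
  have hsub : Icc 0 (sInf F) ⊆ Icc 0 b := Icc_subset_Icc_right hcF.1.2
  have hc : u (sInf F) = v (sInf F) :=
    heq.of_subset_closure (hu.mono hsub) (hv.mono hsub) Ioo_subset_Icc_self
      (closure_Ioo hc0.ne).superset (right_mem_Icc.2 hc0.le)
  have hcb : sInf F = b := le_antisymm hcF.1.2
    ((hvm.le_iff_le (right_mem_Icc.2 hb.le) hcF.1).1 (hcF.2.trans hc.le))
  rwa [hcb] at heq

/-- Lemma 5.5 of Li–Nirenberg, extending Lemma 3.1. -/
theorem stmt_14 (K : ℝ → ℝ) (hK : ContDiff ℝ 1 K) (hK' : ∀ p : ℝ, 0 < deriv K p)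
    (b : ℝ) (hb : 0 < b) (u v : ℝ → ℝ)
    (hu2 : ContDiffOn ℝ 2 u (Set.Ioo 0 b)) (hv2 : ContDiffOn ℝ 2 v (Set.Ioo 0 b))
    (hu1 : ContDiffOn ℝ 1 u (Set.Icc 0 b)) (hv1 : ContDiffOn ℝ 1 v (Set.Icc 0 b))
    (huv : ∀ t ∈ Set.Ioc 0 b, 0 < v t ∧ v t ≤ u t)
    (hmono : (∀ t ∈ Set.Ioc 0 b, 0 < deriv u t ∧ 0 ≤ deriv v t) ∨
      (∀ t ∈ Set.Ioc 0 b, 0 ≤ deriv u t ∧ 0 < deriv v t))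
    (hu0 : u 0 = 0) (hu'0 : derivWithin u (Set.Icc 0 b) 0 = 0)
    (hmain : ∀ t s : ℝ, 0 < t → t < s → s < b → u t = v s →
      deriv K (deriv u t) * deriv (deriv u) t ≤ deriv K (deriv v s) * deriv (deriv v) s) :
    ∀ t ∈ Set.Icc 0 b, u t = v t := by
  have hud : DifferentiableOn ℝ u (Ioo 0 b) := hu2.differentiableOn (by norm_num)
  have hvd : DifferentiableOn ℝ v (Ioo 0 b) := hv2.differentiableOn (by norm_num)
  have huv' : ∀ t ∈ Ioo 0 b, 0 < v t ∧ v t ≤ u t := fun t ht => huv t (Ioo_subset_Ioc_self ht)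
  have hderiv_nonneg : ∀ t ∈ Ioo 0 b, 0 ≤ deriv u t ∧ 0 ≤ deriv v t := fun t ht => by
    rcases hmono with h | h <;> have := h t (Ioo_subset_Ioc_self ht) <;>
      exact ⟨by linarith, by linarith⟩
  have hmatch : ∀ {α β : ℝ → ℝ} {c : ℝ}, IsLevelMatching u v α β b c →
      (∀ x ∈ Ioo 0 c, 0 < deriv u (α x) ∨ 0 < deriv v (β x)) → ∀ x ∈ Ioo 0 c, α x = β x :=
    fun M => M.fst_eq_snd hud hvd (M.deriv_fst_le_deriv_snd hK hK' hb hu2 hv2 hu1 hv1 hu'0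
      (fun t ht => (hderiv_nonneg t ht).1) (fun t ht => (hderiv_nonneg t ht).2)
      (fun t ht => (huv' t ht).2) hmain)
  suffices h : EqOn u v (Ioo 0 b) from
    h.of_subset_closure hu1.continuousOn hv1.continuousOn Ioo_subset_Icc_self
      (closure_Ioo hb.ne).superset
  rcases hmono with hm | hm
  · have hu' : ∀ t ∈ Ioo 0 b, 0 < deriv u t := fun t ht => (hm t (Ioo_subset_Ioc_self ht)).1
    have M := isLevelMatching_invFunOn_left hb hu1.continuousOn hud hu' hvd
      (fun t ht => (hderiv_nonneg t ht).2) huv' hu0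
    intro s hs
    have hα := hmatch M (fun x hx => Or.inl (hu' _ (M.mapsTo_fst hx))) s hs
    simpa only [hα, id_eq] using M.apply_fst_eq s hs
  · have hv' : ∀ t ∈ Ioo 0 b, 0 < deriv v t := fun t ht => (hm t (Ioo_subset_Ioc_self ht)).2
    have hvm := strictMonoOn_of_deriv_pos (convex_Icc 0 b) hv1.continuousOn
      fun t ht => hv' t (by rwa [interior_Icc] at ht)
    refine eqOn_Ioo_of_eqOn_sublevel hb hu1.continuousOn hv1.continuousOn hvm
      (by rw [hu0]; exact (huv b ⟨hb, le_rfl⟩).1) (huv b ⟨hb, le_rfl⟩).2 fun c hc hlt t ht => ?_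
    have M := isLevelMatching_invFunOn_right hc.1 hc.2 hv1.continuousOn hvm hvd hv'
      hu1.continuousOn hud huv' hu0 hlt
    have hβ := hmatch M (fun x hx => Or.inr (hv' _ (M.mapsTo_snd hx))) t ht
    simpa only [← hβ, id_eq] using M.apply_fst_eq t ht
end

section
/- There exists ε₀ > 0 such that for every ε ∈ (0, ε₀) the following holds: define u(t) = ε⁶ t³(1−t)³ and v(t) = ε³ t³(1−t)³. Then whenever 0 < t < 1/2, 0 < s < 1/2, and u(t) = v(s), one has u''(t)/(1+u'(t)²)^{3/2} ≤ v''(s)/(1+v'(s)²)^{3/2}. -/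
/-!
For `w(x) = c x³(1 - x)³` and `p = x(1 - x)` one has `w' = 3c p²(1 - 2x)` and
`w'' = 6c p(1 - 5p)`. With `p = t(1 - t)` and `q = s(1 - s)`, the level condition `u(t) = v(s)`,
i.e. `ε⁶ p³ = ε³ q³`, forces `q = εp`, so `v''(s) = 6ε⁴p(1 - 5q)` while `u''(t) ≤ 6ε⁶p`. Curvature denominators are at least `1`, and
since `|v'(s)| ≤ 1` that of `v` is at most `2^{3/2} < 3`; this loses only a constant factor
against the gain `ε²` between the second derivatives.
-/

open Real

noncomputable def curvature (f : ℝ → ℝ) (x : ℝ) : ℝ :=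
  deriv (deriv f) x / (1 + deriv f x ^ 2) ^ ((3 : ℝ) / 2)

lemma two_rpow_three_halves_le_three : (2 : ℝ) ^ ((3 : ℝ) / 2) ≤ 3 := by
  have hsq : ((2 : ℝ) ^ ((3 : ℝ) / 2)) ^ 2 = 8 := by
    rw [← rpow_natCast, ← rpow_mul (by norm_num)]
    norm_num
  nlinarith [rpow_nonneg (by norm_num : (0 : ℝ) ≤ 2) ((3 : ℝ) / 2)]

lemma div_one_add_sq_rpow_le {y B : ℝ} (a : ℝ) (hyB : y ≤ B) (hB : 0 ≤ B) :
    y / (1 + a ^ 2) ^ ((3 : ℝ) / 2) ≤ B := by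
  have hD : 1 ≤ (1 + a ^ 2) ^ ((3 : ℝ) / 2) :=
    one_le_rpow (le_add_of_nonneg_right (sq_nonneg a)) (by norm_num)
  rcases le_or_gt y 0 with hy | hy
  · exact (div_nonpos_of_nonpos_of_nonneg hy (by linarith)).trans hB
  · exact (div_le_self hy.le hD).trans hyB

lemma div_three_le_div_one_add_sq_rpow {y a : ℝ} (hy : 0 ≤ y) (ha : a ^ 2 ≤ 1) :
    y / 3 ≤ y / (1 + a ^ 2) ^ ((3 : ℝ) / 2) := by
  refine div_le_div_of_nonneg_left hy (by positivity) ?_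
  calc (1 + a ^ 2) ^ ((3 : ℝ) / 2) ≤ (2 : ℝ) ^ ((3 : ℝ) / 2) :=
        rpow_le_rpow (by positivity) (by linarith) (by norm_num)
    _ ≤ 3 := two_rpow_three_halves_le_three

section Bump

variable {c : ℝ} {w : ℝ → ℝ}

lemma hasDerivAt_bump (c x : ℝ) :
    HasDerivAt (fun y => c * y ^ 3 * (1 - y) ^ 3)
      (3 * c * (x * (1 - x)) ^ 2 * (1 - 2 * x)) x := by
  refine (((hasDerivAt_pow 3 x).const_mul c).mul
    (((hasDerivAt_id x).const_sub 1).pow 3)).congr_deriv ?_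
  simp only [id_eq, Pi.pow_apply]
  ring

lemma hasDerivAt_bump_slope (c x : ℝ) :
    HasDerivAt (fun y => 3 * c * (y * (1 - y)) ^ 2 * (1 - 2 * y))
      (6 * c * (x * (1 - x)) * (1 - 5 * (x * (1 - x)))) x := by
  have hp : HasDerivAt (fun y => y * (1 - y)) (1 - 2 * x) x := by
    refine ((hasDerivAt_id x).mul ((hasDerivAt_id x).const_sub 1)).congr_deriv ?_
    simp only [id_eq]
    ring
  refine (((hp.pow 2).const_mul (3 * c)).mul
    (((hasDerivAt_id x).const_mul 2).const_sub 1)).congr_deriv ?_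
  simp only [id_eq, Pi.pow_apply]
  push_cast
  ring

lemma deriv_of_eq_bump (hw : ∀ x, w x = c * x ^ 3 * (1 - x) ^ 3) :
    deriv w = fun x => 3 * c * (x * (1 - x)) ^ 2 * (1 - 2 * x) := by
  obtain rfl : w = fun y => c * y ^ 3 * (1 - y) ^ 3 := funext hw
  funext x
  exact (hasDerivAt_bump c x).deriv

lemma curvature_of_eq_bump (hw : ∀ x, w x = c * x ^ 3 * (1 - x) ^ 3) (x : ℝ) :
    curvature w x = 6 * c * (x * (1 - x)) * (1 - 5 * (x * (1 - x))) /
      (1 + (3 * c * (x * (1 - x)) ^ 2 * (1 - 2 * x)) ^ 2) ^ ((3 : ℝ) / 2) := by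
  rw [curvature, deriv_of_eq_bump hw, (hasDerivAt_bump_slope c x).deriv]

lemma curvature_le_of_eq_bump (hw : ∀ x, w x = c * x ^ 3 * (1 - x) ^ 3) (hc : 0 ≤ c)
    {x : ℝ} (hx₀ : 0 ≤ x) (hx₁ : x ≤ 1) :
    curvature w x ≤ 6 * c * (x * (1 - x)) := by
  have hp : 0 ≤ x * (1 - x) := mul_nonneg hx₀ (by linarith)
  rw [curvature_of_eq_bump hw]
  refine div_one_add_sq_rpow_le _ ?_ (by positivity)
  have : 0 ≤ 6 * c * (x * (1 - x)) * (5 * (x * (1 - x))) := by positivity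
  linarith

lemma le_curvature_of_eq_bump (hw : ∀ x, w x = c * x ^ 3 * (1 - x) ^ 3) (hc₀ : 0 ≤ c)
    (hc₁ : c ≤ 1) {x : ℝ} (hx₀ : 0 ≤ x) (hx₁ : x ≤ 1) (hp : 5 * (x * (1 - x)) ≤ 1) :
    2 * c * (x * (1 - x)) * (1 - 5 * (x * (1 - x))) ≤ curvature w x := by
  have hp₀ : 0 ≤ x * (1 - x) := mul_nonneg hx₀ (by linarith)
  have hslope : (3 * c * (x * (1 - x)) ^ 2 * (1 - 2 * x)) ^ 2 ≤ 1 := by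
    have h₁ : 3 * c * (x * (1 - x)) ^ 2 ≤ 1 := by
      have : c * (x * (1 - x)) ^ 2 ≤ 1 * (1 / 5) ^ 2 := by gcongr; linarith
      linarith
    have h₂ : (1 - 2 * x) ^ 2 ≤ 1 := by nlinarith
    rw [mul_pow]
    calc (3 * c * (x * (1 - x)) ^ 2) ^ 2 * (1 - 2 * x) ^ 2 ≤ 1 ^ 2 * 1 := by
          gcongr
      _ = 1 := by norm_num
  rw [curvature_of_eq_bump hw]
  refine le_trans (le_of_eq ?_) (div_three_le_div_one_add_sq_rpow ?_ hslope)
  · ring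
  · exact mul_nonneg (by positivity) (by linarith)

end Bump

lemma mul_eq_of_bump_eq {ε t s : ℝ} (hε : 0 < ε)
    (h : ε ^ 6 * t ^ 3 * (1 - t) ^ 3 = ε ^ 3 * s ^ 3 * (1 - s) ^ 3) :
    ε * (t * (1 - t)) = s * (1 - s) := by
  have hcube : (ε ^ 2 * (t * (1 - t))) ^ 3 = (ε * (s * (1 - s))) ^ 3 := by
    linear_combination h
  have := (Odd.strictMono_pow (R := ℝ) (by decide : Odd 3)).injective hcube
  exact mul_left_cancel₀ hε.ne' (by linear_combination this)

/-- The Claim (4.16) in Section 6 of Li–Nirenberg: the key computation in the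
counterexample to Question 1.2. -/
theorem stmt_16 : ∃ ε₀ : ℝ, 0 < ε₀ ∧ ∀ ε : ℝ, 0 < ε → ε < ε₀ →
    ∀ u v : ℝ → ℝ,
      (∀ x : ℝ, u x = ε ^ 6 * x ^ 3 * (1 - x) ^ 3) →
      (∀ x : ℝ, v x = ε ^ 3 * x ^ 3 * (1 - x) ^ 3) →
      ∀ t s : ℝ, 0 < t → t < 1 / 2 → 0 < s → s < 1 / 2 → u t = v s →
        deriv (deriv u) t / (1 + (deriv u t) ^ 2) ^ ((3 : ℝ) / 2) ≤
          deriv (deriv v) s / (1 + (deriv v s) ^ 2) ^ ((3 : ℝ) / 2) := by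
  refine ⟨1 / 3, by norm_num, ?_⟩
  intro ε hε hε₀ u v hu hv t s ht₀ ht₁ hs₀ hs₁ huv
  rw [hu, hv] at huv
  have hq := mul_eq_of_bump_eq hε huv
  have hp₀ : 0 < t * (1 - t) := mul_pos ht₀ (by linarith)
  have hp₁ : t * (1 - t) ≤ 1 / 4 := by nlinarith
  have hq₁ : s * (1 - s) ≤ 1 / 12 := by rw [← hq]; nlinarith
  change curvature u t ≤ curvature v s
  calc curvature u t ≤ 6 * ε ^ 6 * (t * (1 - t)) :=
        curvature_le_of_eq_bump hu (by positivity) ht₀.le (by linarith)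
    _ ≤ 2 * ε ^ 3 * (s * (1 - s)) * (1 - 5 * (s * (1 - s))) := by
        rw [← hq]
        have : 0 ≤ 2 * ε ^ 4 * (t * (1 - t)) * (1 - 5 * (ε * (t * (1 - t))) - 3 * ε ^ 2) :=
          mul_nonneg (by positivity) (by nlinarith)
        linear_combination this
    _ ≤ curvature v s :=
        le_curvature_of_eq_bump hv (by positivity) (pow_le_one₀ hε.le (by linarith))
          hs₀.le (by linarith) (by linarith)
end

section
/- There exist b > 0 and real functions u, v that are C² on (0,b) and C¹ on [0,b], with u(t) ≥ v(t) > 0 for all t ∈ (0,b], u(0) = 0, u'(0) = 0, u'(t) ≥ 0 and v'(t) ≥ 0 for all t ∈ (0,b), satisfying the main hypothesis (whenever u(t) = v(s) with 0 < t < s < b, one has u''(t) ≤ v''(s)), and yet u is not identically equal to v on [0,b]. -/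
/-!
Take `u = ψ + ψ(· - 2)` and `v = ψ + ψ(· - 5/2)`, where `ψ` is a smooth step from `0` (on
`x ≤ 0`) to `1` (on `x ≥ 1`) that is strictly increasing in between. Both are nondecreasing
double steps with a plateau at height `1`, and `v ≤ u` because `v` climbs its second step later.
A common value below `1` is impossible for `t < s`, since `u = ψ` is strictly increasing there;
on the plateau both second derivatives vanish; above it `u(t) = v(s)` forces `t - 2 = s - 5/2`,
and the second derivatives agree. Yet `u(3) = 2 > v(3)`.
-/

open Set

local notation "ψ" => Real.smoothTransition

section DerivOfLocallyConstant

variable {f : ℝ → ℝ} {a b : ℝ}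

lemma eqOn_deriv_zero_of_eqOn_Iic (hf : Differentiable ℝ f) (h : EqOn f (fun _ ↦ b) (Iic a)) :
    EqOn (deriv f) (fun _ ↦ 0) (Iic a) := fun x hx ↦ by
  rw [← (hf x).derivWithin (uniqueDiffOn_Iic a x hx), derivWithin_congr h (h hx)]
  exact congrFun (derivWithin_fun_const _ _) x

lemma eqOn_deriv_zero_of_eqOn_Ici (hf : Differentiable ℝ f) (h : EqOn f (fun _ ↦ b) (Ici a)) :
    EqOn (deriv f) (fun _ ↦ 0) (Ici a) := fun x hx ↦ by
  rw [← (hf x).derivWithin (uniqueDiffOn_Ici a x hx), derivWithin_congr h (h hx)]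
  exact congrFun (derivWithin_fun_const _ _) x

lemma deriv_add_comp_sub_const (hf : Differentiable ℝ f) (c : ℝ) :
    deriv (fun x ↦ f x + f (x - c)) = fun x ↦ deriv f x + deriv f (x - c) := by
  funext x
  rw [deriv_fun_add (hf x) (differentiableAt_comp_sub_const.2 (hf (x - c))),
    deriv_comp_sub_const]

end DerivOfLocallyConstant

lemma expNegInvGlue.strictMonoOn : StrictMonoOn expNegInvGlue (Ici 0) := by
  intro x (hx : 0 ≤ x) y (hy : 0 ≤ y) hxy
  rcases hx.eq_or_lt with rfl | hx
  · rw [expNegInvGlue.zero]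
    exact expNegInvGlue.pos_of_pos hxy
  simp only [expNegInvGlue, not_le.2 hx, not_le.2 (hx.trans hxy), if_false]
  exact Real.exp_lt_exp.2 (neg_lt_neg (inv_strictAnti₀ hx hxy))

namespace Real.smoothTransition

lemma strictMonoOn : StrictMonoOn ψ (Icc 0 1) := by
  intro x ⟨hx0, hx1⟩ y ⟨hy0, hy1⟩ hxy
  simp only [Real.smoothTransition]
  rw [div_lt_div_iff₀ (pos_denom x) (pos_denom y)]
  have hgxy : expNegInvGlue x < expNegInvGlue y := expNegInvGlue.strictMonoOn hx0 hy0 hxy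
  have hg1 : expNegInvGlue (1 - y) ≤ expNegInvGlue (1 - x) :=
    expNegInvGlue.monotone (by linarith)
  have hg1x : 0 < expNegInvGlue (1 - x) := expNegInvGlue.pos_of_pos (by linarith)
  nlinarith [expNegInvGlue.nonneg x]

lemma lt_of_lt_of_mem_Ico {x y : ℝ} (hx : x ∈ Ico 0 1) (hxy : x < y) : ψ x < ψ y :=
  calc ψ x < ψ (min y 1) :=
        strictMonoOn ⟨hx.1, hx.2.le⟩ ⟨hx.1.trans (le_min hxy.le hx.2.le), min_le_right _ _⟩
          (lt_min hxy hx.2)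
    _ ≤ ψ y := Real.smoothTransition.monotone (min_le_left _ _)

lemma eq_or_of_eq {x y : ℝ} (h : ψ x = ψ y) :
    x = y ∨ (x ≤ 0 ∧ y ≤ 0) ∨ (1 ≤ x ∧ 1 ≤ y) := by
  rcases le_or_gt x 0 with hx0 | hx0
  · exact Or.inr (Or.inl ⟨hx0, zero_iff_nonpos.1 (h ▸ zero_of_nonpos hx0)⟩)
  rcases le_or_gt 1 x with hx1 | hx1
  · exact Or.inr (Or.inr ⟨hx1, eq_one_iff_one_le.1 (h ▸ one_of_one_le hx1)⟩)
  have hy0 : 0 < y := not_le.1 fun hy ↦ (pos_of_pos hx0).ne' (h.trans (zero_of_nonpos hy))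
  have hy1 : y < 1 := not_le.1 fun hy ↦ (lt_one_of_lt_one hx1).ne (h.trans (one_of_one_le hy))
  exact Or.inl (strictMonoOn.injOn ⟨hx0.le, hx1.le⟩ ⟨hy0.le, hy1.le⟩ h)

lemma differentiable_deriv : Differentiable ℝ (deriv ψ) :=
  Real.smoothTransition.contDiff.differentiable_deriv_two

lemma deriv_eqOn_Iic : EqOn (deriv ψ) (fun _ ↦ 0) (Iic 0) :=
  eqOn_deriv_zero_of_eqOn_Iic Real.smoothTransition.contDiff.differentiable_one
    fun _ ↦ zero_of_nonpos

lemma deriv_eqOn_Ici : EqOn (deriv ψ) (fun _ ↦ 0) (Ici 1) :=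
  eqOn_deriv_zero_of_eqOn_Ici Real.smoothTransition.contDiff.differentiable_one
    fun _ ↦ one_of_one_le

lemma deriv_deriv_eqOn_Iic : EqOn (deriv (deriv ψ)) (fun _ ↦ 0) (Iic 0) :=
  eqOn_deriv_zero_of_eqOn_Iic differentiable_deriv deriv_eqOn_Iic

lemma deriv_deriv_eqOn_Ici : EqOn (deriv (deriv ψ)) (fun _ ↦ 0) (Ici 1) :=
  eqOn_deriv_zero_of_eqOn_Ici differentiable_deriv deriv_eqOn_Ici

lemma deriv_deriv_congr {x y : ℝ} (h : ψ x = ψ y) :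
    deriv (deriv ψ) x = deriv (deriv ψ) y := by
  rcases eq_or_of_eq h with rfl | ⟨hx, hy⟩ | ⟨hx, hy⟩
  · rfl
  · rw [deriv_deriv_eqOn_Iic hx, deriv_deriv_eqOn_Iic hy]
  · rw [deriv_deriv_eqOn_Ici hx, deriv_deriv_eqOn_Ici hy]

end Real.smoothTransition

open Real.smoothTransition

noncomputable def doubleStep (c x : ℝ) : ℝ := ψ x + ψ (x - c)

section DoubleStep

variable {c x : ℝ}

lemma contDiff_doubleStep {n : ℕ∞} : ContDiff ℝ n (doubleStep c) :=
  Real.smoothTransition.contDiff.add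
    (Real.smoothTransition.contDiff.comp (contDiff_id.sub contDiff_const))

lemma monotone_doubleStep : Monotone (doubleStep c) := fun _ _ hxy ↦
  add_le_add (Real.smoothTransition.monotone hxy)
    (Real.smoothTransition.monotone (sub_le_sub_right hxy c))

lemma antitone_doubleStep : Antitone fun c ↦ doubleStep c x := fun _ _ hcc' ↦
  add_le_add_right (Real.smoothTransition.monotone (sub_le_sub_left hcc' x)) _

lemma doubleStep_pos (hx : 0 < x) : 0 < doubleStep c x :=
  add_pos_of_pos_of_nonneg (pos_of_pos hx) (nonneg _)

lemma doubleStep_of_le (hx : x ≤ c) : doubleStep c x = ψ x := by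
  rw [doubleStep, zero_of_nonpos (sub_nonpos.2 hx), add_zero]

lemma doubleStep_of_one_le (hx : 1 ≤ x) : doubleStep c x = 1 + ψ (x - c) := by
  rw [doubleStep, one_of_one_le hx]

lemma deriv_doubleStep : deriv (doubleStep c) = fun x ↦ deriv ψ x + deriv ψ (x - c) :=
  deriv_add_comp_sub_const Real.smoothTransition.contDiff.differentiable_one c

lemma deriv_deriv_doubleStep :
    deriv (deriv (doubleStep c)) = fun x ↦ deriv (deriv ψ) x + deriv (deriv ψ) (x - c) := by
  rw [deriv_doubleStep]
  exact deriv_add_comp_sub_const differentiable_deriv c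

lemma deriv_doubleStep_zero (hc : 0 ≤ c) : deriv (doubleStep c) 0 = 0 := by
  simp only [deriv_doubleStep]
  rw [deriv_eqOn_Iic (le_refl (0 : ℝ)), deriv_eqOn_Iic (sub_nonpos.2 hc), add_zero]

lemma deriv_deriv_doubleStep_eq_of_eq {c' t s : ℝ} (hc : 1 ≤ c) (ht : 0 < t) (hts : t < s)
    (h : doubleStep c t = doubleStep c' s) :
    deriv (deriv (doubleStep c)) t = deriv (deriv (doubleStep c')) s := by
  rcases lt_or_ge t 1 with ht1 | ht1
  · have hψ : ψ t < ψ s := lt_of_lt_of_mem_Ico ⟨ht.le, ht1⟩ hts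
    have hs : ψ s ≤ doubleStep c' s := le_add_of_nonneg_right (nonneg _)
    rw [doubleStep_of_le (ht1.le.trans hc)] at h
    linarith
  · have hs1 : 1 ≤ s := ht1.trans hts.le
    rw [doubleStep_of_one_le ht1, doubleStep_of_one_le hs1, add_right_inj] at h
    simp only [deriv_deriv_doubleStep]
    rw [deriv_deriv_eqOn_Ici ht1, deriv_deriv_eqOn_Ici hs1, deriv_deriv_congr h]

end DoubleStep

/-- Example 1.1 of Li–Nirenberg: in Theorem 2.1 the strict monotonicity assumption
cannot be weakened to u' ≥ 0 and v' ≥ 0. -/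
theorem stmt_17 : ∃ (b : ℝ) (u v : ℝ → ℝ), 0 < b ∧
    ContDiffOn ℝ 2 u (Set.Ioo 0 b) ∧ ContDiffOn ℝ 2 v (Set.Ioo 0 b) ∧
    ContDiffOn ℝ 1 u (Set.Icc 0 b) ∧ ContDiffOn ℝ 1 v (Set.Icc 0 b) ∧
    (∀ t ∈ Set.Ioc 0 b, 0 < v t ∧ v t ≤ u t) ∧
    u 0 = 0 ∧ derivWithin u (Set.Icc 0 b) 0 = 0 ∧
    (∀ t ∈ Set.Ioo 0 b, 0 ≤ deriv u t ∧ 0 ≤ deriv v t) ∧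
    (∀ t s : ℝ, 0 < t → t < s → s < b → u t = v s →
      deriv (deriv u) t ≤ deriv (deriv v) s) ∧
    ¬ ∀ t ∈ Set.Icc 0 b, u t = v t := by
  refine ⟨3, doubleStep 2, doubleStep (5 / 2), by norm_num,
    contDiff_doubleStep.contDiffOn, contDiff_doubleStep.contDiffOn,
    contDiff_doubleStep.contDiffOn, contDiff_doubleStep.contDiffOn,
    fun t ht ↦ ⟨doubleStep_pos ht.1, antitone_doubleStep (by norm_num)⟩,
    (doubleStep_of_le (by norm_num)).trans Real.smoothTransition.zero, ?_,
    fun t _ ↦ ⟨monotone_doubleStep.deriv_nonneg, monotone_doubleStep.deriv_nonneg⟩,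
    fun t s ht hts _ h ↦ (deriv_deriv_doubleStep_eq_of_eq (by norm_num) ht hts h).le, fun h ↦ ?_⟩
  · rw [(contDiff_doubleStep.differentiable_one 0).derivWithin
      (uniqueDiffOn_Icc (by norm_num) 0 (by norm_num))]
    exact deriv_doubleStep_zero (by norm_num)
  · have h3 := h 3 (by norm_num)
    rw [doubleStep_of_one_le (by norm_num), doubleStep_of_one_le (by norm_num)] at h3
    norm_num at h3
    linarith [lt_one_of_lt_one (by norm_num : (1 : ℝ) / 2 < 1)]
end
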